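/- For t = (t_1,t_2,t_3,t_4) ∈ ℝ⁴ with t_3 ≠ 0 and any fixed a ∈ ℝ, consider the function of r ∈ ℝ given by P(r) = f_1(a,r,t)·f_3(a,r) + f_2(a,r,t). Then P is a polynomial function in r of degree exactly 24 whose r²⁴-coefficient is 16·t_3², and consequently the set { r ∈ ℝ | f_1(a,r,t)·f_3(a,r) + f_2(a,r,t) = 0 } is finite and has at most 24 elements. -/
import Mathlib


open Polynomial

/-- `f_1(a,r,t)` (writing `a` for `r₁` and `r` for `r₂`). -/
def f₁ (a r : ℝ) (t : Fin 4 → ℝ) : ℝ :=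
  r ^ 2 * (-25 + 50 * t 0 + 2 * (-6 + a ^ 2) ^ 2 * (-6 + 2 * a ^ 2 - r ^ 2) * t 1 +
    96 * t 2 - 152 * t 2 * a ^ 2 + 4 * t 2 * a ^ 4 + 12 * t 2 * a ^ 6 +
    88 * t 2 * r ^ 2 + 16 * t 2 * a ^ 2 * r ^ 2 - 26 * t 2 * a ^ 4 * r ^ 2 -
    12 * t 2 * r ^ 4 + 18 * t 2 * a ^ 2 * r ^ 4 - 4 * t 2 * r ^ 6 +
    144 * t 3 - 12 * t 3 * a ^ 2 - 8 * t 3 * a ^ 4 + t 3 * a ^ 6 -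
    36 * t 3 * r ^ 2 + 12 * t 3 * a ^ 2 * r ^ 2 - t 3 * a ^ 4 * r ^ 2) ^ 2

/-- `f_2(a,r,t)`. -/
def f₂ (a r : ℝ) (t : Fin 4 → ℝ) : ℝ :=
  (-384 + 160 * r ^ 2 + 324 * r ^ 4 - 88 * r ^ 6 - 15 * r ^ 8 + 3 * r ^ 10 +
    4 * a ^ 8 * (-4 + r ^ 2) + a ^ 6 * (96 * r ^ 2 - 18 * r ^ 4) +
    2 * a ^ 4 * (120 - 46 * r ^ 2 - 75 * r ^ 4 + 13 * r ^ 6) +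
    a ^ 2 * (-160 - 600 * r ^ 2 + 192 * r ^ 4 + 84 * r ^ 6 - 15 * r ^ 8)) ^ 2 *
    (t 0) ^ 2

/-- `f_3(a,r)`. -/
def f₃ (a r : ℝ) : ℝ :=
  (-8 + r ^ 2) * (-8 + a ^ 4 - 2 * r ^ 2 + r ^ 4 - 2 * a ^ 2 * (-1 + r ^ 2)) *
    (-12 + 4 * a ^ 4 + 4 * r ^ 2 + r ^ 4 - 4 * a ^ 2 * (2 + r ^ 2))

set_option maxHeartbeats 4000000 in
def coef0 (a : ℝ) (t : Fin 4 → ℝ) : ℝ := 147456 * (t 0) ^ 2 + 122880 * a ^ 2 * (t 0) ^ 2 + (-158720) * a ^ 4 * (t 0) ^ 2 + (-76800) * a ^ 6 * (t 0) ^ 2 + 69888 * a ^ 8 * (t 0) ^ 2 + 5120 * a ^ 10 * (t 0) ^ 2 + (-7680) * a ^ 12 * (t 0) ^ 2 + 256 * a ^ 16 * (t 0) ^ 2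

set_option maxHeartbeats 4000000 in
def coef2 (a : ℝ) (t : Fin 4 → ℝ) : ℝ := (-480000) + 5529600 * (t 3) + (-15925248) * (t 3) ^ 2 + 3686400 * (t 2) + (-21233664) * (t 2) * (t 3) + (-7077888) * (t 2) ^ 2 + (-16588800) * (t 1) + 95551488 * (t 1) * (t 3) + 63700992 * (t 1) * (t 2) + (-143327232) * (t 1) ^ 2 + 1920000 * (t 0) + (-11059200) * (t 0) * (t 3) + (-7372800) * (t 0) * (t 2) + 33177600 * (t 0) * (t 1) + (-2042880) * (t 0) ^ 2 + (-200000) * a ^ 2 + 1843200 * a ^ 2 * (t 3) + (-3981312) * a ^ 2 * (t 3) ^ 2 + (-4300800) * a ^ 2 * (t 2) + 26542080 * a ^ 2 * (t 2) * (t 3) + 19464192 * a ^ 2 * (t 2) ^ 2 + 4147200 * a ^ 2 * (t 1) + (-31850496) * a ^ 2 * (t 1) * (t 3) + (-116785152) * a ^ 2 * (t 1) * (t 2) + 131383296 * a ^ 2 * (t 1) ^ 2 + 800000 * a ^ 2 * (t 0) + (-3686400) * a ^ 2 * (t 0) * (t 3) + 8601600 * a ^ 2 * (t 0) * (t 2)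 + (-8294400) * a ^ 2 * (t 0) * (t 1) + (-390400) * a ^ 2 * (t 0) ^ 2 + 300000 * a ^ 4 + (-3955200) * a ^ 4 * (t 3) + 12718080 * a ^ 4 * (t 3) ^ 2 + (-4582400) * a ^ 4 * (t 2) + 25509888 * a ^ 4 * (t 2) * (t 3) + (-4571136) * a ^ 4 * (t 2) ^ 2 + 12672000 * a ^ 4 * (t 1) + (-76308480) * a ^ 4 * (t 1) * (t 3) + (-20791296) * a ^ 4 * (t 1) * (t 2) + 65691648 * a ^ 4 * (t 1) ^ 2 + (-1200000) * a ^ 4 * (t 0) + 7910400 * a ^ 4 * (t 0) * (t 3) + 9164800 * a ^ 4 * (t 0) * (t 2) + (-25344000) * a ^ 4 * (t 0) * (t 1) + 1539456 * a ^ 4 * (t 0) ^ 2 + 198400 * a ^ 6 * (t 3) + (-1336320) * a ^ 6 * (t 3) ^ 2 + 4172800 * a ^ 6 * (t 2) + (-27758592) * a ^ 6 * (t 2) * (t 3) + (-22482944) * a ^ 6 * (t 2) ^ 2 + (-7718400) * a ^ 6 * (t 1) + 52531200 * a ^ 6 * (t 1) * (t 3) + 113983488 * a ^ 6 * (t 1)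 * (t 2) + (-133373952) * a ^ 6 * (t 1) ^ 2 + (-396800) * a ^ 6 * (t 0) * (t 3) + (-8345600) * a ^ 6 * (t 0) * (t 2) + 15436800 * a ^ 6 * (t 0) * (t 1) + (-332288) * a ^ 6 * (t 0) ^ 2 + (-20000) * a ^ 8 + 438400 * a ^ 8 * (t 3) + (-1884672) * a ^ 8 * (t 3) ^ 2 + 249600 * a ^ 8 * (t 2) + (-729088) * a ^ 8 * (t 2) * (t 3) + 13604864 * a ^ 8 * (t 2) ^ 2 + 812800 * a ^ 8 * (t 1) + (-4497408) * a ^ 8 * (t 1) * (t 3) + (-54067200) * a ^ 8 * (t 1) * (t 2) + 66355200 * a ^ 8 * (t 1) ^ 2 + 80000 * a ^ 8 * (t 0) + (-876800) * a ^ 8 * (t 0) * (t 3) + (-499200) * a ^ 8 * (t 0) * (t 2) + (-1625600) * a ^ 8 * (t 0) * (t 1) + (-163072) * a ^ 8 * (t 0) ^ 2 + (-43200) * a ^ 10 * (t 3) + 340480 * a ^ 10 * (t 3) ^ 2 + (-531200) * a ^ 10 * (t 2) + 4698112 * a ^ 10 * (t 2) * (t 3) + 2544640 * a ^ 10 * (t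 2) ^ 2 + 364800 * a ^ 10 * (t 1) + (-4687872) * a ^ 10 * (t 1) * (t 3) + (-1306624) * a ^ 10 * (t 1) * (t 2) + (-11805696) * a ^ 10 * (t 1) ^ 2 + 86400 * a ^ 10 * (t 0) * (t 3) + 1062400 * a ^ 10 * (t 0) * (t 2) + (-729600) * a ^ 10 * (t 0) * (t 1) + 64000 * a ^ 10 * (t 0) ^ 2 + (-12800) * a ^ 12 * (t 3) + 92672 * a ^ 12 * (t 3) ^ 2 + 6400 * a ^ 12 * (t 2) + (-378880) * a ^ 12 * (t 2) * (t 3) + (-2648576) * a ^ 12 * (t 2) ^ 2 + (-96000) * a ^ 12 * (t 1) + 1296896 * a ^ 12 * (t 1) * (t 3) + 6161408 * a ^ 12 * (t 1) * (t 2) + (-1337856) * a ^ 12 * (t 1) ^ 2 + 25600 * a ^ 12 * (t 0) * (t 3) + (-12800) * a ^ 12 * (t 0) * (t 2) + 192000 * a ^ 12 * (t 0) * (t 1) + 4864 * a ^ 12 * (t 0) ^ 2 + 1600 * a ^ 14 * (t 3) + (-23360) * a ^ 14 * (t 3) ^ 2 + 19200 * a ^ 14 * (t 2) + (-287488) * a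 ^ 14 * (t 2) * (t 3) + (-34816) * a ^ 14 * (t 2) ^ 2 + 6400 * a ^ 14 * (t 1) + 1280 * a ^ 14 * (t 1) * (t 3) + (-1056768) * a ^ 14 * (t 1) * (t 2) + 980992 * a ^ 14 * (t 1) ^ 2 + (-3200) * a ^ 14 * (t 0) * (t 3) + (-38400) * a ^ 14 * (t 0) * (t 2) + (-12800) * a ^ 14 * (t 0) * (t 1) + (-3072) * a ^ 14 * (t 0) ^ 2 + (-800) * a ^ 16 * (t 3) ^ 2 + 32512 * a ^ 16 * (t 2) * (t 3) + 185344 * a ^ 16 * (t 2) ^ 2 + (-42240) * a ^ 16 * (t 1) * (t 3) + (-120832) * a ^ 16 * (t 1) * (t 2) + (-181248) * a ^ 16 * (t 1) ^ 2 + (-128) * a ^ 16 * (t 0) ^ 2 + 512 * a ^ 18 * (t 3) ^ 2 + 5888 * a ^ 18 * (t 2) * (t 3) + (-3072) * a ^ 18 * (t 2) ^ 2 + 5888 * a ^ 18 * (t 1) * (t 3) + 45056 * a ^ 18 * (t 1) * (t 2) + 15360 * a ^ 18 * (t 1) ^ 2 + (-32) * a ^ 20 * (t 3) ^ 2 + (-768)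 * a ^ 20 * (t 2) * (t 3) + (-4608) * a ^ 20 * (t 2) ^ 2 + (-256) * a ^ 20 * (t 1) * (t 3) + (-3072) * a ^ 20 * (t 1) * (t 2) + (-512) * a ^ 20 * (t 1) ^ 2

set_option maxHeartbeats 4000000 in
def coef4 (a : ℝ) (t : Fin 4 → ℝ) : ℝ := 100000 + (-2534400) * (t 3) + 11280384 * (t 3) ^ 2 + 2611200 * (t 2) + (-9732096) * (t 2) * (t 3) + (-11501568) * (t 2) ^ 2 + 691200 * (t 1) + (-27869184) * (t 1) * (t 3) + 55738368 * (t 1) * (t 2) + (-17915904) * (t 1) ^ 2 + (-400000) * (t 0) + 5068800 * (t 0) * (t 3) + (-5222400) * (t 0) * (t 2) + (-1382400) * (t 0) * (t 1) + 176768 * (t 0) ^ 2 + (-375000) * a ^ 2 + 4300800 * a ^ 2 * (t 3) + (-12994560) * a ^ 2 * (t 3) ^ 2 + 6118400 * a ^ 2 * (t 2) + (-41951232) * a ^ 2 * (t 2) * (t 3) + 2580480 * a ^ 2 * (t 2) ^ 2 + (-15494400) * a ^ 2 * (t 1) + 103514112 * a ^ 2 * (t 1) * (t 3) + 59719680 *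 a ^ 2 * (t 1) * (t 2) + (-123918336) * a ^ 2 * (t 1) ^ 2 + 1500000 * a ^ 2 * (t 0) + (-8601600) * a ^ 2 * (t 0) * (t 3) + (-12236800) * a ^ 2 * (t 0) * (t 2) + 30988800 * a ^ 2 * (t 0) * (t 1) + (-1943136) * a ^ 2 * (t 0) ^ 2 + (-57500) * a ^ 4 + 1384000 * a ^ 4 * (t 3) + (-6538752) * a ^ 4 * (t 3) ^ 2 + (-7004800) * a ^ 4 * (t 2) + 39733248 * a ^ 4 * (t 2) * (t 3) + 43198464 * a ^ 4 * (t 2) ^ 2 + 9168000 * a ^ 4 * (t 1) + (-44430336) * a ^ 4 * (t 1) * (t 3) + (-194033664) * a ^ 4 * (t 1) * (t 2) + 184882176 * a ^ 4 * (t 1) ^ 2 + 230000 * a ^ 4 * (t 0) + (-2768000) * a ^ 4 * (t 0) * (t 3) + 14009600 * a ^ 4 * (t 0) * (t 2) + (-18336000) * a ^ 4 * (t 0) * (t 1) + 309840 * a ^ 4 * (t 0) ^ 2 + 60000 * a ^ 6 + (-1298400) * a ^ 6 * (t 3) + 5939328 * a ^ 6 * (t 3) ^ 2 + (-1936000) *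 a ^ 6 * (t 2) + 17678848 * a ^ 6 * (t 2) * (t 3) + (-26807808) * a ^ 6 * (t 2) ^ 2 + 958400 * a ^ 6 * (t 1) + (-23136768) * a ^ 6 * (t 1) * (t 3) + 77580288 * a ^ 6 * (t 1) * (t 2) + (-80206848) * a ^ 6 * (t 1) ^ 2 + (-240000) * a ^ 6 * (t 0) + 2596800 * a ^ 6 * (t 0) * (t 3) + 3872000 * a ^ 6 * (t 0) * (t 2) + (-1916800) * a ^ 6 * (t 0) * (t 1) + 535104 * a ^ 6 * (t 0) ^ 2 + 2500 * a ^ 8 + (-11600) * a ^ 8 * (t 3) + 46144 * a ^ 8 * (t 3) ^ 2 + 1853600 * a ^ 8 * (t 2) + (-15919104) * a ^ 8 * (t 2) * (t 3) + (-14509824) * a ^ 8 * (t 2) ^ 2 + (-1519200) * a ^ 8 * (t 1) + 18146304 * a ^ 8 * (t 1) * (t 3) + 32888832 * a ^ 8 * (t 1) * (t 2) + (-1022976) * a ^ 8 * (t 1) ^ 2 + (-10000) * a ^ 8 * (t 0) + 23200 * a ^ 8 * (t 0) * (t 3) + (-3707200) * a ^ 8 * (t 0) * (t 2) + 3038400 *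 a ^ 8 * (t 0) * (t 1) + (-172064) * a ^ 8 * (t 0) ^ 2 + 64600 * a ^ 10 * (t 3) + (-556608) * a ^ 10 * (t 3) ^ 2 + 92000 * a ^ 10 * (t 2) + (-697344) * a ^ 10 * (t 2) * (t 3) + 10319232 * a ^ 10 * (t 2) ^ 2 + 287200 * a ^ 10 * (t 1) + (-2617088) * a ^ 10 * (t 1) * (t 3) + (-24724992) * a ^ 10 * (t 1) * (t 2) + 11475072 * a ^ 10 * (t 1) ^ 2 + (-129200) * a ^ 10 * (t 0) * (t 3) + (-184000) * a ^ 10 * (t 0) * (t 2) + (-574400) * a ^ 10 * (t 0) * (t 1) + (-37248) * a ^ 10 * (t 0) ^ 2 + (-4800) * a ^ 12 * (t 3) + 63360 * a ^ 12 * (t 3) ^ 2 + (-100000) * a ^ 12 * (t 2) + 1564928 * a ^ 12 * (t 2) * (t 3) + 1076544 * a ^ 12 * (t 2) ^ 2 + (-10400) * a ^ 12 * (t 1) + (-607552) * a ^ 12 * (t 1) * (t 3) + 2518912 * a ^ 12 * (t 1) * (t 2) + (-3924672) * a ^ 12 * (t 1) ^ 2 + 9600 * a ^ 12 * (t 0)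 * (t 3) + 200000 * a ^ 12 * (t 0) * (t 2) + 20800 * a ^ 12 * (t 0) * (t 1) + 13280 * a ^ 12 * (t 0) ^ 2 + (-200) * a ^ 14 * (t 3) + 13352 * a ^ 14 * (t 3) ^ 2 + (-2400) * a ^ 14 * (t 2) + (-75552) * a ^ 14 * (t 2) * (t 3) + (-1063680) * a ^ 14 * (t 2) ^ 2 + (-800) * a ^ 14 * (t 1) + 222176 * a ^ 14 * (t 1) * (t 3) + 1041408 * a ^ 14 * (t 1) * (t 2) + 589056 * a ^ 14 * (t 1) ^ 2 + 400 * a ^ 14 * (t 0) * (t 3) + 4800 * a ^ 14 * (t 0) * (t 2) + 1600 * a ^ 14 * (t 0) * (t 1) + 1344 * a ^ 14 * (t 0) ^ 2 + (-2748) * a ^ 16 * (t 3) ^ 2 + (-45792) * a ^ 16 * (t 2) * (t 3) + (-24192) * a ^ 16 * (t 2) ^ 2 + (-22112) * a ^ 16 * (t 1) * (t 3) + (-244992) * a ^ 16 * (t 1) * (t 2) + (-37760) * a ^ 16 * (t 1) ^ 2 + 16 * a ^ 16 * (t 0) ^ 2 + 96 * a ^ 18 * (t 3) ^ 2 + 4000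 * a ^ 18 * (t 2) * (t 3) + 34176 * a ^ 18 * (t 2) ^ 2 + 416 * a ^ 18 * (t 1) * (t 3) + 11776 * a ^ 18 * (t 1) * (t 2) + 128 * a ^ 18 * (t 1) ^ 2 + 4 * a ^ 20 * (t 3) ^ 2 + 96 * a ^ 20 * (t 2) * (t 3) + 576 * a ^ 20 * (t 2) ^ 2 + 32 * a ^ 20 * (t 1) * (t 3) + 384 * a ^ 20 * (t 1) * (t 2) + 64 * a ^ 20 * (t 1) ^ 2

set_option maxHeartbeats 4000000 in
def coef6 (a : ℝ) (t : Fin 4 → ℝ) : ℝ := 135000 + (-1267200) * (t 3) + 1824768 * (t 3) ^ 2 + (-2201600) * (t 2) + 16441344 * (t 2) * (t 3) + 516096 * (t 2) ^ 2 + 5241600 * (t 1) + (-29196288) * (t 1) * (t 3) + (-30523392) * (t 1) * (t 2) + 46282752 * (t 1) ^ 2 + (-540000) * (t 0) + 2534400 * (t 0) * (t 3) + 4403200 * (t 0) * (t 2) + (-10483200) * (t 0) * (t 1) + 711264 * (t 0) ^ 2 + 80000 * a ^ 2 + (-1968000) * a ^ 2 * (t 3) + 9068544 * a ^ 2 * (t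 3) ^ 2 + 4038400 * a ^ 2 * (t 2) + (-16760832) * a ^ 2 * (t 2) * (t 3) + (-28409856) * a ^ 2 * (t 2) ^ 2 + (-2697600) * a ^ 2 * (t 1) + (-4589568) * a ^ 2 * (t 1) * (t 3) + 110260224 * a ^ 2 * (t 1) * (t 2) + (-76142592) * a ^ 2 * (t 1) ^ 2 + (-320000) * a ^ 2 * (t 0) + 3936000 * a ^ 2 * (t 0) * (t 3) + (-8076800) * a ^ 2 * (t 0) * (t 2) + 5395200 * a ^ 2 * (t 0) * (t 1) + (-43712) * a ^ 2 * (t 0) ^ 2 + (-62500) * a ^ 4 + 1085600 * a ^ 4 * (t 3) + (-3888000) * a ^ 4 * (t 3) ^ 2 + 3078400 * a ^ 4 * (t 2) + (-29416960) * a ^ 4 * (t 2) * (t 3) + 18719232 * a ^ 4 * (t 2) ^ 2 + (-2950400) * a ^ 4 * (t 1) + 38043648 * a ^ 4 * (t 1) * (t 3) + (-24450048) * a ^ 4 * (t 1) * (t 2) + 17003520 * a ^ 4 * (t 1) ^ 2 + 250000 * a ^ 4 * (t 0) + (-2171200) * a ^ 4 * (t 0) * (t 3) + (-6156800) * a ^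 4 * (t 0) * (t 2) + 5900800 * a ^ 4 * (t 0) * (t 1) + (-677104) * a ^ 4 * (t 0) ^ 2 + (-7500) * a ^ 6 + 264800 * a ^ 6 * (t 3) + (-1972608) * a ^ 6 * (t 3) ^ 2 + (-2418400) * a ^ 6 * (t 2) + 17607168 * a ^ 6 * (t 2) * (t 3) + 25688576 * a ^ 6 * (t 2) ^ 2 + 1917600 * a ^ 6 * (t 1) + (-17174784) * a ^ 6 * (t 1) * (t 3) + (-65570304) * a ^ 6 * (t 1) * (t 2) + 26265600 * a ^ 6 * (t 1) ^ 2 + 30000 * a ^ 6 * (t 0) + (-529600) * a ^ 6 * (t 0) * (t 3) + 4836800 * a ^ 6 * (t 0) * (t 2) + (-3835200) * a ^ 6 * (t 0) * (t 1) + 203120 * a ^ 6 * (t 0) ^ 2 + (-108600) * a ^ 8 * (t 3) + 920320 * a ^ 8 * (t 3) ^ 2 + (-381200) * a ^ 8 * (t 2) + 5176704 * a ^ 8 * (t 2) * (t 3) + (-15563136) * a ^ 8 * (t 2) ^ 2 + (-262800) * a ^ 8 * (t 1) + (-683008) * a ^ 8 * (t 1) * (t 3) + 34651392 * a ^ 8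 * (t 1) * (t 2) + (-18921600) * a ^ 8 * (t 1) ^ 2 + 217200 * a ^ 8 * (t 0) * (t 3) + 762400 * a ^ 8 * (t 0) * (t 2) + 525600 * a ^ 8 * (t 0) * (t 1) + 103952 * a ^ 8 * (t 0) ^ 2 + 2600 * a ^ 10 * (t 3) + 10432 * a ^ 10 * (t 3) ^ 2 + 212800 * a ^ 10 * (t 2) + (-3140416) * a ^ 10 * (t 2) * (t 3) + (-4091904) * a ^ 10 * (t 2) ^ 2 + (-11200) * a ^ 10 * (t 1) + 1851136 * a ^ 10 * (t 1) * (t 3) + 102528 * a ^ 10 * (t 1) * (t 2) + 5135232 * a ^ 10 * (t 1) ^ 2 + (-5200) * a ^ 10 * (t 0) * (t 3) + (-425600) * a ^ 10 * (t 0) * (t 2) + 22400 * a ^ 10 * (t 0) * (t 1) + (-26640) * a ^ 10 * (t 0) ^ 2 + 800 * a ^ 12 * (t 3) + (-43544) * a ^ 12 * (t 3) ^ 2 + 12400 * a ^ 12 * (t 2) + (-108544) * a ^ 12 * (t 2) * (t 3) + 2537216 * a ^ 12 * (t 2) ^ 2 + 2800 * a ^ 12 * (t 1) + (-395904) * a ^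 12 * (t 1) * (t 3) + (-2993152) * a ^ 12 * (t 1) * (t 2) + (-593664) * a ^ 12 * (t 1) ^ 2 + (-1600) * a ^ 12 * (t 0) * (t 3) + (-24800) * a ^ 12 * (t 0) * (t 2) + (-5600) * a ^ 12 * (t 0) * (t 1) + (-5488) * a ^ 12 * (t 0) ^ 2 + 5080 * a ^ 14 * (t 3) ^ 2 + 137520 * a ^ 14 * (t 2) * (t 3) + 198528 * a ^ 14 * (t 2) ^ 2 + 23600 * a ^ 14 * (t 1) * (t 3) + 525312 * a ^ 14 * (t 1) * (t 2) + 6784 * a ^ 14 * (t 1) ^ 2 + (-144) * a ^ 14 * (t 0) ^ 2 + 28 * a ^ 16 * (t 3) ^ 2 + (-7392) * a ^ 16 * (t 2) * (t 3) + (-110208) * a ^ 16 * (t 2) ^ 2 + 1312 * a ^ 16 * (t 1) * (t 3) + (-9984) * a ^ 16 * (t 1) * (t 2) + 4224 * a ^ 16 * (t 1) ^ 2 + (-20) * a ^ 18 * (t 3) ^ 2 + (-592) * a ^ 18 * (t 2) * (t 3) + (-4224) * a ^ 18 * (t 2) ^ 2 + (-144) * a ^ 18 * (t 1) * (t 3)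 + (-2176) * a ^ 18 * (t 1) * (t 2) + (-256) * a ^ 18 * (t 1) ^ 2

set_option maxHeartbeats 4000000 in
def coef8 (a : ℝ) (t : Fin 4 → ℝ) : ℝ := (-27500) + 705600 * (t 3) + (-2944512) * (t 3) ^ 2 + (-796800) * (t 2) + 1419264 * (t 2) * (t 3) + 6326272 * (t 2) ^ 2 + (-172800) * (t 1) + 8543232 * (t 1) * (t 3) + (-20109312) * (t 1) * (t 2) + 6054912 * (t 1) ^ 2 + 110000 * (t 0) + (-1411200) * (t 0) * (t 3) + 1593600 * (t 0) * (t 2) + 345600 * (t 0) * (t 1) + (-21664) * (t 0) ^ 2 + 26250 * a ^ 2 + (-228000) * a ^ 2 * (t 3) + (-286848) * a ^ 2 * (t 3) ^ 2 + (-1840000) * a ^ 2 * (t 2) + 17088000 * a ^ 2 * (t 2) * (t 3) + (-5108224) * a ^ 2 * (t 2) ^ 2 + 1742400 * a ^ 2 * (t 1) + (-16519680) * a ^ 2 * (t 1) * (t 3) + (-8871936) * a ^ 2 * (t 1) * (t 2) + 9649152 * a ^ 2 * (t 1) ^ 2 + (-105000) * a ^ 2 * (t 0) + 456000 * a ^ 2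 * (t 0) * (t 3) + 3680000 * a ^ 2 * (t 0) * (t 2) + (-3484800) * a ^ 2 * (t 0) * (t 1) + 378216 * a ^ 2 * (t 0) ^ 2 + 8125 * a ^ 4 + (-332000) * a ^ 4 * (t 3) + 2242944 * a ^ 4 * (t 3) ^ 2 + 1464800 * a ^ 4 * (t 2) + (-7169024) * a ^ 4 * (t 2) * (t 3) + (-20447744) * a ^ 4 * (t 2) ^ 2 + (-948000) * a ^ 4 * (t 1) + 3497472 * a ^ 4 * (t 1) * (t 3) + 49409024 * a ^ 4 * (t 1) * (t 2) + (-21178368) * a ^ 4 * (t 1) ^ 2 + (-32500) * a ^ 4 * (t 0) + 664000 * a ^ 4 * (t 0) * (t 3) + (-2929600) * a ^ 4 * (t 0) * (t 2) + 1896000 * a ^ 4 * (t 0) * (t 1) + (-106524) * a ^ 4 * (t 0) ^ 2 + 71600 * a ^ 6 * (t 3) + (-445728) * a ^ 6 * (t 3) ^ 2 + 556400 * a ^ 6 * (t 2) + (-7857280) * a ^ 6 * (t 2) * (t 3) + 11485312 * a ^ 6 * (t 2) ^ 2 + 37200 * a ^ 6 * (t 1) + 3964800 * a ^ 6 * (t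 1) * (t 3) + (-21145600) * a ^ 6 * (t 1) * (t 2) + 11956224 * a ^ 6 * (t 1) ^ 2 + (-143200) * a ^ 6 * (t 0) * (t 3) + (-1112800) * a ^ 6 * (t 0) * (t 2) + (-74400) * a ^ 6 * (t 0) * (t 1) + (-140016) * a ^ 6 * (t 0) ^ 2 + 5300 * a ^ 8 * (t 3) + (-166672) * a ^ 8 * (t 3) ^ 2 + (-238600) * a ^ 8 * (t 2) + 2918784 * a ^ 8 * (t 2) * (t 3) + 6681344 * a ^ 8 * (t 2) ^ 2 + 35000 * a ^ 8 * (t 1) + (-1973696) * a ^ 8 * (t 1) * (t 3) + (-5252736) * a ^ 8 * (t 1) * (t 2) + (-2605760) * a ^ 8 * (t 1) ^ 2 + (-10600) * a ^ 8 * (t 0) * (t 3) + 477200 * a ^ 8 * (t 0) * (t 2) + (-70000) * a ^ 8 * (t 0) * (t 1) + 26708 * a ^ 8 * (t 0) ^ 2 + (-1250) * a ^ 10 * (t 3) + 56200 * a ^ 10 * (t 3) ^ 2 + (-27000) * a ^ 10 * (t 2) + 553120 * a ^ 10 * (t 2) * (t 3) + (-3267392) * a ^ 10 * (t 2) ^ 2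 + (-3800) * a ^ 10 * (t 1) + 275232 * a ^ 10 * (t 1) * (t 3) + 4168448 * a ^ 10 * (t 1) * (t 2) + 72768 * a ^ 10 * (t 1) ^ 2 + 2500 * a ^ 10 * (t 0) * (t 3) + 54000 * a ^ 10 * (t 0) * (t 2) + 7600 * a ^ 10 * (t 0) * (t 1) + 11544 * a ^ 10 * (t 0) ^ 2 + (-3104) * a ^ 12 * (t 3) ^ 2 + (-211104) * a ^ 12 * (t 2) * (t 3) + (-541280) * a ^ 12 * (t 2) ^ 2 + 6784 * a ^ 12 * (t 1) * (t 3) + (-549696) * a ^ 12 * (t 1) * (t 2) + 59808 * a ^ 12 * (t 1) ^ 2 + 532 * a ^ 12 * (t 0) ^ 2 + (-446) * a ^ 14 * (t 3) ^ 2 + 3464 * a ^ 14 * (t 2) * (t 3) + 203072 * a ^ 14 * (t 2) ^ 2 + (-4408) * a ^ 14 * (t 1) * (t 3) + (-21504) * a ^ 14 * (t 1) * (t 2) + (-9152) * a ^ 14 * (t 1) ^ 2 + 41 * a ^ 16 * (t 3) ^ 2 + 1576 * a ^ 16 * (t 2) * (t 3) + 13792 * a ^ 16 * (t 2) ^ 2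 + 264 * a ^ 16 * (t 1) * (t 3) + 5312 * a ^ 16 * (t 1) * (t 2) + 416 * a ^ 16 * (t 1) ^ 2

set_option maxHeartbeats 4000000 in
def coef10 (a : ℝ) (t : Fin 4 → ℝ) : ℝ := (-3750) + (-36000) * (t 3) + 611712 * (t 3) ^ 2 + 384000 * (t 2) + (-3359232) * (t 2) * (t 3) + 345600 * (t 2) ^ 2 + (-288000) * (t 1) + 1410048 * (t 1) * (t 3) + 4340736 * (t 1) * (t 2) + (-2737152) * (t 1) ^ 2 + 15000 * (t 0) + 72000 * (t 0) * (t 3) + (-768000) * (t 0) * (t 2) + 576000 * (t 0) * (t 1) + (-79128) * (t 0) ^ 2 + (-3750) * a ^ 2 + 141600 * a ^ 2 * (t 3) + (-749952) * a ^ 2 * (t 3) ^ 2 + (-404000) * a ^ 2 * (t 2) + 244224 * a ^ 2 * (t 2) * (t 3) + 7687680 * a ^ 2 * (t 2) ^ 2 + 160800 * a ^ 2 * (t 1) + 1527552 * a ^ 2 * (t 1) * (t 3) + (-15939072) * a ^ 2 * (t 1) * (t 2) + 5640192 * a ^ 2 * (t 1) ^ 2 + 15000 * a ^ 2 * (t 0)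 + (-283200) * a ^ 2 * (t 0) * (t 3) + 808000 * a ^ 2 * (t 0) * (t 2) + (-321600) * a ^ 2 * (t 0) * (t 1) + 17880 * a ^ 2 * (t 0) ^ 2 + (-10000) * a ^ 4 * (t 3) + (-113184) * a ^ 4 * (t 3) ^ 2 + (-386000) * a ^ 4 * (t 2) + 5112960 * a ^ 4 * (t 2) * (t 3) + (-4196736) * a ^ 4 * (t 2) ^ 2 + 60400 * a ^ 4 * (t 1) + (-2571264) * a ^ 4 * (t 1) * (t 3) + 4826880 * a ^ 4 * (t 1) * (t 2) + (-2958336) * a ^ 4 * (t 1) ^ 2 + 20000 * a ^ 4 * (t 0) * (t 3) + 772000 * a ^ 4 * (t 0) * (t 2) + (-120800) * a ^ 4 * (t 0) * (t 1) + 97704 * a ^ 4 * (t 0) ^ 2 + (-7800) * a ^ 6 * (t 3) + 170112 * a ^ 6 * (t 3) ^ 2 + 151000 * a ^ 6 * (t 2) + (-1175168) * a ^ 6 * (t 2) * (t 3) + (-5771520) * a ^ 6 * (t 2) ^ 2 + (-28200) * a ^ 6 * (t 1) + 832704 * a ^ 6 * (t 1) * (t 3) + 6073984 * a ^ 6 *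 (t 1) * (t 2) + 202752 * a ^ 6 * (t 1) ^ 2 + 15600 * a ^ 6 * (t 0) * (t 3) + (-302000) * a ^ 6 * (t 0) * (t 2) + 56400 * a ^ 6 * (t 0) * (t 1) + (-12168) * a ^ 6 * (t 0) ^ 2 + 950 * a ^ 8 * (t 3) + (-29048) * a ^ 8 * (t 3) ^ 2 + 32100 * a ^ 8 * (t 2) + (-771840) * a ^ 8 * (t 2) * (t 3) + 2456256 * a ^ 8 * (t 2) ^ 2 + 2500 * a ^ 8 * (t 1) + (-20416) * a ^ 8 * (t 1) * (t 3) + (-3150720) * a ^ 8 * (t 1) * (t 2) + 238272 * a ^ 8 * (t 1) ^ 2 + (-1900) * a ^ 8 * (t 0) * (t 3) + (-64200) * a ^ 8 * (t 0) * (t 2) + (-5000) * a ^ 8 * (t 0) * (t 1) + (-13920) * a ^ 8 * (t 0) ^ 2 + (-1560) * a ^ 10 * (t 3) ^ 2 + 177072 * a ^ 10 * (t 2) * (t 3) + 787008 * a ^ 10 * (t 2) ^ 2 + (-31024) * a ^ 10 * (t 1) * (t 3) + 250176 * a ^ 10 * (t 1) * (t 2) + (-73856) * a ^ 10 * (t 1)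 ^ 2 + (-1056) * a ^ 10 * (t 0) ^ 2 + 714 * a ^ 12 * (t 3) ^ 2 + 7648 * a ^ 12 * (t 2) * (t 3) + (-235872) * a ^ 12 * (t 2) ^ 2 + 5152 * a ^ 12 * (t 1) * (t 3) + 59712 * a ^ 12 * (t 1) * (t 2) + 8480 * a ^ 12 * (t 1) ^ 2 + (-44) * a ^ 14 * (t 3) ^ 2 + (-2364) * a ^ 14 * (t 2) * (t 3) + (-26400) * a ^ 14 * (t 2) ^ 2 + (-252) * a ^ 14 * (t 1) * (t 3) + (-7296) * a ^ 14 * (t 1) * (t 2) + (-352) * a ^ 14 * (t 1) ^ 2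

set_option maxHeartbeats 4000000 in
def coef12 (a : ℝ) (t : Fin 4 → ℝ) : ℝ := 625 + (-18000) * (t 3) + 25920 * (t 3) ^ 2 + 38400 * (t 2) + 331776 * (t 2) * (t 3) + (-1116928) * (t 2) ^ 2 + (-414720) * (t 1) * (t 3) + 1769472 * (t 1) * (t 2) + (-414720) * (t 1) ^ 2 + (-2500) * (t 0) + 36000 * (t 0) * (t 3) + (-76800) * (t 0) * (t 2) + 1484 * (t 0) ^ 2 + (-6600) * a ^ 2 * (t 3) + 125280 * a ^ 2 * (t 3) ^ 2 + 129200 * a ^ 2 * (t 2) + (-1491840) * a ^ 2 * (t 2) * (t 3) + 625152 * a ^ 2 * (t 2) ^ 2 + (-28800) * a ^ 2 * (t 1) + 535680 * a ^ 2 * (t 1) * (t 3) + 258048 * a ^ 2 * (t 1) * (t 2) + 120960 * a ^ 2 * (t 1) ^ 2 + 13200 * a ^ 2 * (t 0) * (t 3) + (-258400) * a ^ 2 * (t 0) * (t 2) + 57600 * a ^ 2 * (t 0) * (t 1) + (-33864) * a ^ 2 * (t 0) ^ 2 + 3700 * a ^ 4 * (t 3) + (-57024) * a ^ 4 * (t 3)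 ^ 2 + (-53200) * a ^ 4 * (t 2) + 34176 * a ^ 4 * (t 2) * (t 3) + 2760384 * a ^ 4 * (t 2) ^ 2 + 9600 * a ^ 4 * (t 1) + (-70848) * a ^ 4 * (t 1) * (t 3) + (-3008640) * a ^ 4 * (t 1) * (t 2) + 247104 * a ^ 4 * (t 1) ^ 2 + (-7400) * a ^ 4 * (t 0) * (t 3) + 106400 * a ^ 4 * (t 0) * (t 2) + (-19200) * a ^ 4 * (t 0) * (t 1) + 668 * a ^ 4 * (t 0) ^ 2 + (-350) * a ^ 6 * (t 3) + 816 * a ^ 6 * (t 3) ^ 2 + (-22500) * a ^ 6 * (t 2) + 530432 * a ^ 6 * (t 2) * (t 3) + (-1077664) * a ^ 6 * (t 2) ^ 2 + (-800) * a ^ 6 * (t 1) + (-63168) * a ^ 6 * (t 1) * (t 3) + 1301120 * a ^ 6 * (t 1) * (t 2) + (-159936) * a ^ 6 * (t 1) ^ 2 + 700 * a ^ 6 * (t 0) * (t 3) + 45000 * a ^ 6 * (t 0) * (t 2) + 1600 * a ^ 6 * (t 0) * (t 1) + 9984 * a ^ 6 * (t 0) ^ 2 + 2996 * a ^ 8 *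 (t 3) ^ 2 + (-74688) * a ^ 8 * (t 2) * (t 3) + (-688752) * a ^ 8 * (t 2) ^ 2 + 23392 * a ^ 8 * (t 1) * (t 3) + 27456 * a ^ 8 * (t 1) * (t 2) + 37984 * a ^ 8 * (t 1) ^ 2 + 1240 * a ^ 8 * (t 0) ^ 2 + (-514) * a ^ 10 * (t 3) ^ 2 + (-14440) * a ^ 10 * (t 2) * (t 3) + 179256 * a ^ 10 * (t 2) ^ 2 + (-2968) * a ^ 10 * (t 1) * (t 3) + (-64224) * a ^ 10 * (t 1) * (t 2) + (-4056) * a ^ 10 * (t 1) ^ 2 + 26 * a ^ 12 * (t 3) ^ 2 + 2184 * a ^ 12 * (t 2) * (t 3) + 32804 * a ^ 12 * (t 2) ^ 2 + 132 * a ^ 12 * (t 1) * (t 3) + 6168 * a ^ 12 * (t 1) * (t 2) + 164 * a ^ 12 * (t 1) ^ 2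

set_option maxHeartbeats 4000000 in
def coef14 (a : ℝ) (t : Fin 4 → ℝ) : ℝ := 1800 * (t 3) + (-18144) * (t 3) ^ 2 + (-16800) * (t 2) + 152064 * (t 2) * (t 3) + (-6912) * (t 2) ^ 2 + 3600 * (t 1) + (-20736) * (t 1) * (t 3) + (-179712) * (t 1) * (t 2) + 31104 * (t 1) ^ 2 + (-3600) * (t 0) * (t 3) + 33600 * (t 0) * (t 2) + (-7200) * (t 0) * (t 1) + 4584 * (t 0) ^ 2 + (-600) * a ^ 2 * (t 3) + 1728 * a ^ 2 * (t 3) ^ 2 + 9400 * a ^ 2 * (t 2) + 105408 * a ^ 2 * (t 2) * (t 3) + (-691200) * a ^ 2 * (t 2) ^ 2 + (-1200) * a ^ 2 * (t 1) + (-32832) * a ^ 2 * (t 1) * (t 3) + 691200 * a ^ 2 * (t 1) * (t 2) + (-72576) * a ^ 2 * (t 1) ^ 2 + 1200 * a ^ 2 * (t 0) * (t 3) + (-18800) * a ^ 2 * (t 0) * (t 2) + 2400 * a ^ 2 * (t 0) * (t 1) + 1272 * a ^ 2 * (t 0) ^ 2 + 50 * a ^ 4 * (t 3) + 3888 * a ^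 4 * (t 3) ^ 2 + 9300 * a ^ 4 * (t 2) + (-191520) * a ^ 4 * (t 2) * (t 3) + 254304 * a ^ 4 * (t 2) ^ 2 + 100 * a ^ 4 * (t 1) + 27648 * a ^ 4 * (t 1) * (t 3) + (-262080) * a ^ 4 * (t 1) * (t 2) + 39744 * a ^ 4 * (t 1) ^ 2 + (-100) * a ^ 4 * (t 0) * (t 3) + (-18600) * a ^ 4 * (t 0) * (t 2) + (-200) * a ^ 4 * (t 0) * (t 1) + (-4200) * a ^ 4 * (t 0) ^ 2 + (-1392) * a ^ 6 * (t 3) ^ 2 + 6448 * a ^ 6 * (t 2) * (t 3) + 375072 * a ^ 6 * (t 2) ^ 2 + (-7392) * a ^ 6 * (t 1) * (t 3) + (-85280) * a ^ 6 * (t 1) * (t 2) + (-9216) * a ^ 6 * (t 1) ^ 2 + (-888) * a ^ 6 * (t 0) ^ 2 + 178 * a ^ 8 * (t 3) ^ 2 + 11272 * a ^ 8 * (t 2) * (t 3) + (-89208) * a ^ 8 * (t 2) ^ 2 + 848 * a ^ 8 * (t 1) * (t 3) + 38160 * a ^ 8 * (t 1) * (t 2) + 984 * a ^ 8 * (t 1)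 ^ 2 + (-8) * a ^ 10 * (t 3) ^ 2 + (-1272) * a ^ 10 * (t 2) * (t 3) + (-27648) * a ^ 10 * (t 2) ^ 2 + (-36) * a ^ 10 * (t 1) * (t 3) + (-3288) * a ^ 10 * (t 1) * (t 2) + (-40) * a ^ 10 * (t 1) ^ 2

set_option maxHeartbeats 4000000 in
def coef16 (a : ℝ) (t : Fin 4 → ℝ) : ℝ := 1296 * (t 3) ^ 2 + (-600) * (t 2) + (-20736) * (t 2) * (t 3) + 70656 * (t 2) ^ 2 + 5184 * (t 1) * (t 3) + (-58752) * (t 1) * (t 2) + 5184 * (t 1) ^ 2 + 1200 * (t 0) * (t 2) + (-303) * (t 0) ^ 2 + (-864) * a ^ 2 * (t 3) ^ 2 + (-2100) * a ^ 2 * (t 2) + 33408 * a ^ 2 * (t 2) * (t 3) + (-24096) * a ^ 2 * (t 2) ^ 2 + (-3456) * a ^ 2 * (t 1) * (t 3) + 13824 * a ^ 2 * (t 1) * (t 2) + (-3456) * a ^ 2 * (t 1) ^ 2 + 4200 * a ^ 2 * (t 0) * (t 2) + 954 * a ^ 2 * (t 0) ^ 2 + 216 * a ^ 4 * (t 3)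 ^ 2 + 7008 * a ^ 4 * (t 2) * (t 3) + (-124608) * a ^ 4 * (t 2) ^ 2 + 864 * a ^ 4 * (t 1) * (t 3) + 39168 * a ^ 4 * (t 1) * (t 2) + 864 * a ^ 4 * (t 1) ^ 2 + 381 * a ^ 4 * (t 0) ^ 2 + (-24) * a ^ 6 * (t 3) ^ 2 + (-4736) * a ^ 6 * (t 2) * (t 3) + 28056 * a ^ 6 * (t 2) ^ 2 + (-96) * a ^ 6 * (t 1) * (t 3) + (-13120) * a ^ 6 * (t 1) * (t 2) + (-96) * a ^ 6 * (t 1) ^ 2 + a ^ 8 * (t 3) ^ 2 + 456 * a ^ 8 * (t 2) * (t 3) + 16008 * a ^ 8 * (t 2) ^ 2 + 4 * a ^ 8 * (t 1) * (t 3) + 1080 * a ^ 8 * (t 1) * (t 2) + 4 * a ^ 8 * (t 1) ^ 2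

set_option maxHeartbeats 4000000 in
def coef18 (a : ℝ) (t : Fin 4 → ℝ) : ℝ := 200 * (t 2) + (-2016) * (t 2) * (t 3) + (-288) * (t 2) ^ 2 + 1728 * (t 1) * (t 2) + (-400) * (t 0) * (t 2) + (-90) * (t 0) ^ 2 + (-2640) * a ^ 2 * (t 2) * (t 3) + 23136 * a ^ 2 * (t 2) ^ 2 + (-7776) * a ^ 2 * (t 1) * (t 2) + (-90) * a ^ 2 * (t 0) ^ 2 + 1048 * a ^ 4 * (t 2) * (t 3) + (-5064) * a ^ 4 * (t 2) ^ 2 + 2448 * a ^ 4 * (t 1) * (t 2) + (-92) * a ^ 6 * (t 2) * (t 3) + (-6288) * a ^ 6 * (t 2) ^ 2 + (-200) * a ^ 6 * (t 1) * (t 2)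

set_option maxHeartbeats 4000000 in
def coef20 (a : ℝ) (t : Fin 4 → ℝ) : ℝ := 288 * (t 2) * (t 3) + (-1840) * (t 2) ^ 2 + 576 * (t 1) * (t 2) + 9 * (t 0) ^ 2 + (-96) * a ^ 2 * (t 2) * (t 3) + 400 * a ^ 2 * (t 2) ^ 2 + (-192) * a ^ 2 * (t 1) * (t 2) + 8 * a ^ 4 * (t 2) * (t 3) + 1604 * a ^ 4 * (t 2) ^ 2 + 16 * a ^ 4 * (t 1) * (t 2)

set_option maxHeartbeats 4000000 in
def coef22 (a : ℝ) (t : Fin 4 → ℝ) : ℝ := (-240) * a ^ 2 * (t 2) ^ 2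

set_option maxHeartbeats 4000000 in
def coef24 (a : ℝ) (t : Fin 4 → ℝ) : ℝ := 16 * (t 2) ^ 2

/-- Coefficients of the polynomial `f₁·f₃ + f₂` in `r`. -/
def coefP (a : ℝ) (t : Fin 4 → ℝ) (i : ℕ) : ℝ :=
  if i = 0 then coef0 a t else
  if i = 2 then coef2 a t else
  if i = 4 then coef4 a t else
  if i = 6 then coef6 a t else
  if i = 8 then coef8 a t else
  if i = 10 then coef10 a t else
  if i = 12 then coef12 a t else
  if i = 14 then coef14 a t else
  if i = 16 then coef16 a t else
  if i = 18 then coef18 a t else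
  if i = 20 then coef20 a t else
  if i = 22 then coef22 a t else
  if i = 24 then coef24 a t else
  0

noncomputable def Qpoly (a : ℝ) (t : Fin 4 → ℝ) : Polynomial ℝ :=
  ∑ i ∈ Finset.range 25, Polynomial.C (coefP a t i) * Polynomial.X ^ i

set_option maxHeartbeats 4000000 in
lemma Qpoly_eval (a : ℝ) (t : Fin 4 → ℝ) (r : ℝ) :
    (Qpoly a t).eval r = f₁ a r t * f₃ a r + f₂ a r t := by
  simp only [Qpoly, Polynomial.eval_finset_sum, Polynomial.eval_mul, Polynomial.eval_pow,
    Polynomial.eval_C, Polynomial.eval_X, Finset.sum_range_succ, Finset.sum_range_zero]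
  norm_num [coefP]
  unfold coef0 coef2 coef4 coef6 coef8 coef10 coef12 coef14 coef16 coef18 coef20 coef22 coef24 f₁ f₂ f₃
  ring

set_option maxHeartbeats 1000000 in
lemma Qpoly_coeff24 (a : ℝ) (t : Fin 4 → ℝ) : (Qpoly a t).coeff 24 = 16 * (t 2) ^ 2 := by
  simp only [Qpoly, Polynomial.finset_sum_coeff, Polynomial.coeff_C_mul,
    Polynomial.coeff_X_pow, mul_ite, mul_one, mul_zero]
  rw [Finset.sum_ite_eq (Finset.range 25) 24]
  norm_num [coefP, coef24]

lemma Qpoly_degree_le (a : ℝ) (t : Fin 4 → ℝ) : (Qpoly a t).degree ≤ 24 := by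
  apply (Polynomial.degree_sum_le _ _).trans
  apply Finset.sup_le
  intro i hi
  refine (Polynomial.degree_C_mul_X_pow_le _ _).trans ?_
  exact_mod_cast Nat.cast_le.mpr (Nat.lt_succ_iff.mp (Finset.mem_range.mp hi))

/-- For `t_3 ≠ 0` and any fixed `a`, the function
`r ↦ f₁(a,r,t)·f₃(a,r) + f₂(a,r,t)` is a polynomial in `r` of degree exactly `24`
with `r²⁴`-coefficient `16·t_3²`; hence its zero set is finite with at most `24`
elements. -/
theorem singular_equation_poly_degree_24
    (t : Fin 4 → ℝ) (ht₃ : t 2 ≠ 0) (a : ℝ) :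
    (∃ Q : Polynomial ℝ,
      (∀ r : ℝ, Q.eval r = f₁ a r t * f₃ a r + f₂ a r t) ∧
      Q.degree = 24 ∧ Q.coeff 24 = 16 * (t 2) ^ 2) ∧
    ({r : ℝ | f₁ a r t * f₃ a r + f₂ a r t = 0}).Finite ∧
    ({r : ℝ | f₁ a r t * f₃ a r + f₂ a r t = 0}).ncard ≤ 24 := by
  have hc : (Qpoly a t).coeff 24 = 16 * (t 2) ^ 2 := Qpoly_coeff24 a t
  have hcne : (Qpoly a t).coeff 24 ≠ 0 := by
    rw [hc]; exact mul_ne_zero (by norm_num) (pow_ne_zero _ ht₃)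
  have hdeg : (Qpoly a t).degree = 24 :=
    le_antisymm (Qpoly_degree_le a t) (Polynomial.le_degree_of_ne_zero hcne)
  have hQ0 : Qpoly a t ≠ 0 := fun h => by simp [h] at hdeg
  have hnat : (Qpoly a t).natDegree = 24 := Polynomial.natDegree_eq_of_degree_eq_some hdeg
  have hset : {r : ℝ | f₁ a r t * f₃ a r + f₂ a r t = 0}
      = {r : ℝ | (Qpoly a t).IsRoot r} := by
    ext r; simp [Polynomial.IsRoot, Qpoly_eval]
  have hsub : {r : ℝ | f₁ a r t * f₃ a r + f₂ a r t = 0}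
      ⊆ ((Qpoly a t).roots.toFinset : Set ℝ) := by
    rw [hset]; intro r hr
    simp only [Finset.coe_sort_coe, Multiset.mem_toFinset, Finset.mem_coe]
    exact (Polynomial.mem_roots hQ0).2 hr
  have hfin : ({r : ℝ | f₁ a r t * f₃ a r + f₂ a r t = 0} : Set ℝ).Finite :=
    Set.Finite.subset ((Qpoly a t).roots.toFinset.finite_toSet) hsub
  refine ⟨⟨Qpoly a t, Qpoly_eval a t, hdeg, hc⟩, hfin, ?_⟩
  calc ({r : ℝ | f₁ a r t * f₃ a r + f₂ a r t = 0}).ncard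
      ≤ ((Qpoly a t).roots.toFinset : Set ℝ).ncard :=
        Set.ncard_le_ncard hsub ((Qpoly a t).roots.toFinset.finite_toSet)
    _ = (Qpoly a t).roots.toFinset.card := Set.ncard_coe_finset _
    _ ≤ Multiset.card (Qpoly a t).roots := Multiset.toFinset_card_le _
    _ ≤ (Qpoly a t).natDegree := Polynomial.card_roots' _
    _ = 24 := hnat
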